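/- arXiv:1003.4116 — 4 statements merged into one kernel-verified Lean document; each statement's English description precedes it below -/
import Mathlib

section
/- Let Γ be a group, I the augmentation ideal of ℂ[Γ], and V a right Γ-module. The map ℓ_q sending v ∈ V^{Γ,q+1} to the homomorphism I^q/I^{q+1} → V^Γ determined by (γ₁−1)⋯(γ_q−1) ↦ v|(γ₁−1)⋯(γ_q−1) is a well-defined ℂ-linear map whose kernel is exactly V^{Γ,q}. In particular there is an exact sequence 0 → V^{Γ,q} → V^{Γ,q+1} → Hom_{ℂ[Γ]}(I^q/I^{q+1}, V^Γ). -/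
/-- Higher order invariants `V^{Γ,q}`:
`V^{Γ,0} = {0}`, `V^{Γ,q+1} = {v : ∀ γ, v|(γ−1) ∈ V^{Γ,q}}` (so `V^{Γ,1} = V^Γ`). -/
def HigherInv {Γ V : Type*} [Group Γ] [AddCommGroup V] [Module ℂ V]
    (ρ : Γ →* (V →ₗ[ℂ] V)) : ℕ → Set V
  | 0 => {0}
  | q + 1 => {v | ∀ γ : Γ, ρ γ v - v ∈ HigherInv ρ q}

/-- `pertSeq ρ [γ₁, …, γ_q] v = v|(γ₁−1)(γ₂−1)⋯(γ_q−1)`, the successive application of the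
group ring elements `γᵢ − 1` to `v`. -/
def pertSeq {Γ V : Type*} [Group Γ] [AddCommGroup V] [Module ℂ V]
    (ρ : Γ →* (V →ₗ[ℂ] V)) : List Γ → V → V
  | [], v => v
  | γ :: l, v => pertSeq ρ l (ρ γ v - v)

/-- The map `ℓ_q : v ↦ ((γ₁−1)⋯(γ_q−1) ↦ v|(γ₁−1)⋯(γ_q−1))` on `V^{Γ,q+1}` is well defined
with values in the invariants `V^Γ = V^{Γ,1}` (well-definedness on `I^q/I^{q+1}` being expressed
by the vanishing of `v|(γ₁−1)⋯(γ_{q+1}−1)` on the generators of `I^{q+1}`), and its kernel is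
exactly `V^{Γ,q}`; this gives the exact sequence
`0 → V^{Γ,q} → V^{Γ,q+1} → Hom_{ℂ[Γ]}(I^q/I^{q+1}, V^Γ)`. -/
theorem stmt2 {Γ V : Type*} [Group Γ] [AddCommGroup V] [Module ℂ V]
    (ρ : Γ →* (V →ₗ[ℂ] V)) (q : ℕ) (v : V) (hv : v ∈ HigherInv ρ (q + 1)) :
    (∀ l : List Γ, l.length = q → pertSeq ρ l v ∈ HigherInv ρ 1) ∧
    (∀ l : List Γ, l.length = q + 1 → pertSeq ρ l v = 0) ∧
    (v ∈ HigherInv ρ q ↔ ∀ l : List Γ, l.length = q → pertSeq ρ l v = 0) := by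
  have key : ∀ n : ℕ, ∀ w : V,
      w ∈ HigherInv ρ n ↔ ∀ l : List Γ, l.length = n → pertSeq ρ l w = 0 := by
    intro n
    induction n with
    | zero =>
      intro w
      constructor
      · rintro rfl l hl
        rw [List.length_eq_zero_iff] at hl
        subst hl; rfl
      · intro h
        exact h [] rfl
    | succ n ih =>
      intro w
      constructor
      · intro h l hl
        match l with
        | γ :: l' =>
          simp only [List.length_cons, Nat.succ_inj] at hl
          exact (ih _).mp (h γ) l' hl
      · intro h γ
        refine (ih _).mpr fun l hl => ?_
        exact h (γ :: l) (by simp [hl])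
  have app : ∀ l l' : List Γ, ∀ w : V,
      pertSeq ρ (l ++ l') w = pertSeq ρ l' (pertSeq ρ l w) := by
    intro l
    induction l with
    | nil => intro l' w; rfl
    | cons γ l ih => intro l' w; exact ih l' _
  have h2 : ∀ l : List Γ, l.length = q + 1 → pertSeq ρ l v = 0 :=
    (key (q + 1) v).mp hv
  refine ⟨?_, h2, key q v⟩
  intro l hl γ
  have : pertSeq ρ (l ++ [γ]) v = 0 := h2 _ (by simp [hl])
  rw [app] at this
  simpa [pertSeq, HigherInv] using this
end

section
/- Let Γ₀ be a free group on generators A₁,…,A_{t−1}. There exists a unique system of functions g_𝐢 : Γ₀ → ℂ, indexed by finite tuples 𝐢 with entries in {1,…,t−1}, satisfying: g_{()} = 1; g_{(j,𝐢)}|(A_j − 1) = g_𝐢; g_𝐢|(A_j − 1) = 0 whenever 𝐢 is nonempty and its first entry is not j (or 𝐢 is empty); and g_𝐢(1) = 0 for |𝐢| ≥ 1. Moreover, for tuples 𝐢, 𝐣 of equal length q, g_𝐢|(A_{j(1)}−1)⋯(A_{j(q)}−1) = δ_{𝐢,𝐣} (the constant function 1 if 𝐢=𝐣, else 0). -/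
/-- `actGen j f = f|(A_j − 1)` for the left-translation action of the free group on
`Map(Γ₀, ℂ)`: `(f|γ)(δ) = f(γδ)`, so `f|(A_j−1) = f(A_j·) − f`. -/
def actGen {m : ℕ} (j : Fin m) (f : FreeGroup (Fin m) → ℂ) : FreeGroup (Fin m) → ℂ :=
  fun δ => f (FreeGroup.of j * δ) - f δ

/-- `pertList [j₁,…,j_q] f = f|(A_{j₁}−1)⋯(A_{j_q}−1)`. -/
def pertList {m : ℕ} : List (Fin m) → (FreeGroup (Fin m) → ℂ) → (FreeGroup (Fin m) → ℂ)
  | [], f => f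
  | j :: l, f => pertList l (actGen j f)

/-- The defining conditions of the system `g_𝐢` on the free group `Γ₀` on generators
`A₁,…,A_{t−1}` (modelled as `FreeGroup (Fin m)` with `m = t − 1`):
`g_{()} = 1`; `g_{(j,𝐢)}|(A_j−1) = g_𝐢`; `g_𝐢|(A_j−1) = 0` whenever the first entry of `𝐢`
is not `j` (in particular when `𝐢` is empty); and `g_𝐢(1) = 0` for `|𝐢| ≥ 1`. -/
def SystemG {m : ℕ} (g : List (Fin m) → FreeGroup (Fin m) → ℂ) : Prop :=
  g [] = (fun _ => 1) ∧
  (∀ (j : Fin m) (i : List (Fin m)), actGen j (g (j :: i)) = g i) ∧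
  (∀ (j : Fin m) (i : List (Fin m)), i.head? ≠ some j → actGen j (g i) = 0) ∧
  (∀ i : List (Fin m), i ≠ [] → g i 1 = 0)

namespace Stmt9Aux
variable {m : ℕ}

abbrev V (m : ℕ) := List (Fin m) → ℂ

def Mj (j : Fin m) : V m → V m :=
  fun v i => v i + (match i with | [] => 0 | k :: i' => if k = j then v i' else 0)

def Nj (j : Fin m) (v : V m) : V m
  | [] => v []
  | k :: i' => v (k :: i') - if k = j then Nj j v i' else 0

lemma Mj_Nj (j : Fin m) (v : V m) : Mj j (Nj j v) = v := by
  funext i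
  cases i with
  | nil => simp [Mj, Nj]
  | cons k i' => by_cases h : k = j <;> simp [Mj, Nj, h]

lemma Nj_Mj (j : Fin m) (v : V m) : Nj j (Mj j v) = v := by
  funext i
  induction i with
  | nil => simp [Mj, Nj]
  | cons k i' ih => by_cases h : k = j <;> simp [Mj, Nj, h, ih]

def uj (j : Fin m) : (Function.End (V m))ˣ :=
  ⟨Mj j, Nj j, funext fun v => Mj_Nj j v, funext fun v => Nj_Mj j v⟩

def ρ : FreeGroup (Fin m) →* (Function.End (V m))ˣ := FreeGroup.lift uj

lemma ρ_of (j : Fin m) : (ρ (FreeGroup.of j)).val = Mj j := by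
  show ((FreeGroup.lift uj) (FreeGroup.of j)).val = Mj j
  rw [FreeGroup.lift_apply_of]; rfl

lemma ρ_of_inv (j : Fin m) : ((ρ (FreeGroup.of j))⁻¹).val = Nj j := by
  show (((FreeGroup.lift uj) (FreeGroup.of j))⁻¹).val = Nj j
  rw [FreeGroup.lift_apply_of]; rfl

lemma blank (γ : FreeGroup (Fin m)) : ∀ v : V m, (ρ γ).val v [] = v [] := by
  induction γ using FreeGroup.induction_on with
  | C1 => intro v; rw [map_one]; rfl
  | of j =>
    intro v
    have hp : (pure j : FreeGroup (Fin m)) = FreeGroup.of j := rfl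
    rw [ρ_of]; simp [Mj]
  | inv_of j _ =>
    intro v
    have hp : (pure j : FreeGroup (Fin m)) = FreeGroup.of j := rfl
    rw [map_inv, ρ_of_inv]; simp [Nj]
  | mul x y ihx ihy =>
    intro v
    rw [map_mul]
    exact (ihx _).trans (ihy v)

def e : V m := fun i => if i = [] then 1 else 0

def G : List (Fin m) → FreeGroup (Fin m) → ℂ :=
  fun i γ => (ρ γ).val e i

lemma G_apply_mul_of (j : Fin m) (δ : FreeGroup (Fin m)) (i : List (Fin m)) :
    G i (FreeGroup.of j * δ) = Mj j (fun i' => G i' δ) i := by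
  show (ρ (FreeGroup.of j * δ)).val e i = _
  rw [map_mul]
  show (ρ (FreeGroup.of j)).val ((ρ δ).val e) i = _
  rw [ρ_of]
  rfl

lemma G_system : SystemG (G (m := m)) := by
  refine ⟨?_, ?_, ?_, ?_⟩
  · funext γ
    show (ρ γ).val e [] = 1
    rw [blank]; simp [e]
  · intro j i
    funext δ
    show G (j :: i) (FreeGroup.of j * δ) - G (j :: i) δ = G i δ
    rw [G_apply_mul_of]
    simp [Mj]
  · intro j i hi
    funext δ
    show G i (FreeGroup.of j * δ) - G i δ = 0
    rw [G_apply_mul_of]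
    cases i with
    | nil => simp [Mj]
    | cons k i' =>
      have hk : k ≠ j := by simpa using hi
      simp [Mj, hk]
  · intro i hi
    show (ρ 1).val e i = 0
    rw [map_one]
    show e i = 0
    simp [e, hi]

/-- Key multiplicativity lemma for any solution. -/
lemma key {g : List (Fin m) → FreeGroup (Fin m) → ℂ} (hg : SystemG g)
    (γ : FreeGroup (Fin m)) :
    ∀ δ : FreeGroup (Fin m), (fun i => g i (γ * δ)) = (ρ γ).val (fun i => g i δ) := by
  obtain ⟨h1, h2, h3, h4⟩ := hg
  induction γ using FreeGroup.induction_on with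
  | C1 => intro δ; rw [one_mul, map_one]; rfl
  | of j =>
    intro δ
    have hp : (pure j : FreeGroup (Fin m)) = FreeGroup.of j := rfl
    rw [ρ_of]
    funext i
    cases i with
    | nil =>
      show g [] _ = Mj j (fun i => g i δ) []
      simp [Mj, h1]
    | cons k i' =>
      show g (k :: i') (FreeGroup.of j * δ) = Mj j (fun i => g i δ) (k :: i')
      by_cases h : k = j
      · subst h
        have hh := congrFun (h2 k i') δ
        simp only [actGen] at hh
        simp only [Mj, if_pos rfl, eq_self_iff_true, if_true]
        linear_combination hh
      · have hh := congrFun (h3 j (k :: i') (by simp [h])) δ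
        simp only [actGen, Pi.zero_apply] at hh
        simp only [Mj, if_neg h, add_zero]
        linear_combination hh
  | inv_of j ih =>
    intro δ
    have hp : (pure j : FreeGroup (Fin m)) = FreeGroup.of j := rfl
    have h := ih ((FreeGroup.of j)⁻¹ * δ)
    rw [← mul_assoc, mul_inv_cancel, one_mul] at h
    have h2' := congrArg ((ρ (FreeGroup.of j))⁻¹).val h
    have hcomp : ∀ w : V m, ((ρ (FreeGroup.of j))⁻¹).val ((ρ (FreeGroup.of j)).val w) = w := by
      intro w
      have : ((((ρ (FreeGroup.of j))⁻¹ : (Function.End (V m))ˣ) : Function.End (V m)) *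
          ((ρ (FreeGroup.of j) : (Function.End (V m))ˣ) : Function.End (V m))) w = (1 : Function.End (V m)) w := by
        rw [Units.inv_mul]
      exact this
    rw [hcomp] at h2'
    rw [← map_inv] at h2'
    exact h2'.symm
  | mul x y ihx ihy =>
    intro δ
    rw [mul_assoc, ihx (y * δ), ihy δ, map_mul]
    rfl

lemma unique_sol {g : List (Fin m) → FreeGroup (Fin m) → ℂ} (hg : SystemG g) : g = G := by
  funext i γ
  have h := congrFun (key hg γ 1) i
  rw [mul_one] at h
  have he : (fun i => g i (1 : FreeGroup (Fin m))) = (e : V m) := by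
    funext i'
    cases i' with
    | nil => rw [hg.1]; simp [e]
    | cons k l => rw [hg.2.2.2 _ (by simp)]; simp [e]
  rw [he] at h
  exact h

lemma pertList_zero (l : List (Fin m)) : pertList l (0 : FreeGroup (Fin m) → ℂ) = 0 := by
  induction l with
  | nil => rfl
  | cons a l ih =>
    show pertList l (actGen a 0) = 0
    have : actGen a (0 : FreeGroup (Fin m) → ℂ) = 0 := by
      funext δ; simp [actGen]
    rw [this, ih]

end Stmt9Aux

/-- There is a unique system of functions `g_𝐢 : Γ₀ → ℂ` satisfying the conditions of
`SystemG`; moreover for tuples `𝐢, 𝐣` of equal length `q`,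
`g_𝐢|(A_{j(1)}−1)⋯(A_{j(q)}−1) = δ_{𝐢,𝐣}` (the constant function `1` if `𝐢 = 𝐣`, else `0`). -/
theorem stmt9 (m : ℕ) :
    (∃! g : List (Fin m) → FreeGroup (Fin m) → ℂ, SystemG g) ∧
    (∀ g : List (Fin m) → FreeGroup (Fin m) → ℂ, SystemG g →
      ∀ i j : List (Fin m), i.length = j.length →
        pertList j (g i) = if i = j then (fun _ => (1 : ℂ)) else (0 : FreeGroup (Fin m) → ℂ)) := by
  constructor
  · exact ⟨Stmt9Aux.G, Stmt9Aux.G_system, fun g hg => Stmt9Aux.unique_sol hg⟩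
  · intro g hg i j
    induction j generalizing i with
    | nil =>
      intro hlen
      rw [List.length_nil, List.length_eq_zero_iff] at hlen
      subst hlen
      show g [] = _
      rw [hg.1, if_pos rfl]
    | cons a j' ih =>
      intro hlen
      cases i with
      | nil => simp at hlen
      | cons b i' =>
        show pertList j' (actGen a (g (b :: i'))) = _
        by_cases h : b = a
        · subst h
          rw [hg.2.1 b i', ih i' (by simpa using hlen)]
          by_cases h' : i' = j' <;> simp [h']
        · rw [hg.2.2.1 a (b :: i') (by simp [h]), Stmt9Aux.pertList_zero]
          rw [if_neg (by simp [h])]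
end

section
/- Let Γ be a group acting on the upper half-plane, ω a closed Γ-invariant holomorphic 1-form, and ω₁ a holomorphic 1-form satisfying ω₁|γ = ω₁ + h(γ)·ω for a group homomorphism h : Γ → ℂ. Fix a base point z₀ and set K(z) = ∫_{z₀}^{z} ω₁ (path-independent). Then for all γ, δ ∈ Γ: K|(γ−1)(δ−1) = h(γ)·λ(δ), where λ(δ) = ∫_{z}^{δz} ω (independent of z). In particular K is a third order invariant with multilinear form h ⊗ λ. -/
open Complex

/-- Iterated integrals and third order invariants.  The upper half-plane is realised as
`U = {z : ℂ | 0 < Im z}`, on which the group `Γ` acts by holomorphic maps `A γ`.  The closed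
holomorphic 1-forms `ω(z)dz` and `ω₁(z)dz` satisfy `ω|γ = ω` (invariance) and
`ω₁|γ = ω₁ + h(γ)·ω` for a group homomorphism `h : Γ → ℂ`; `F` is a primitive of `ω`
(so `λ(γ) = ∫_z^{γz} ω = F(γz) − F(z)` is independent of `z`), and
`K(z) = ∫_{z₀}^{z} ω₁` is the (path-independent) primitive of `ω₁` vanishing at `z₀`.
Then for all `γ, δ ∈ Γ`: `K|(γ−1)(δ−1) = h(γ)·λ(δ)`; in particular `K` is a third order
invariant with multilinear form `h ⊗ λ`. -/
theorem stmt12 {Γ : Type*} [Group Γ]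
    (A : Γ → ℂ → ℂ)
    (hA1 : ∀ z : ℂ, 0 < z.im → A 1 z = z)
    (hAmul : ∀ (γ δ : Γ) (z : ℂ), 0 < z.im → A (γ * δ) z = A γ (A δ z))
    (hAmaps : ∀ (γ : Γ) (z : ℂ), 0 < z.im → 0 < (A γ z).im)
    (hAdiff : ∀ (γ : Γ) (z : ℂ), 0 < z.im → DifferentiableAt ℂ (A γ) z)
    (ω ω₁ : ℂ → ℂ)
    (hωhol : ∀ z : ℂ, 0 < z.im → DifferentiableAt ℂ ω z)
    (hω₁hol : ∀ z : ℂ, 0 < z.im → DifferentiableAt ℂ ω₁ z)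
    (h : Γ → ℂ) (hhom : ∀ γ₁ γ₂ : Γ, h (γ₁ * γ₂) = h γ₁ + h γ₂)
    (hωinv : ∀ (γ : Γ) (z : ℂ), 0 < z.im → ω (A γ z) * deriv (A γ) z = ω z)
    (hω₁trans : ∀ (γ : Γ) (z : ℂ), 0 < z.im →
      ω₁ (A γ z) * deriv (A γ) z = ω₁ z + h γ * ω z)
    (F : ℂ → ℂ) (hF : ∀ z : ℂ, 0 < z.im → HasDerivAt F (ω z) z)
    (lam : Γ → ℂ) (hlam : ∀ (γ : Γ) (z : ℂ), 0 < z.im → F (A γ z) - F z = lam γ)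
    (z₀ : ℂ) (hz₀ : 0 < z₀.im)
    (K : ℂ → ℂ) (hK : ∀ z : ℂ, 0 < z.im → HasDerivAt K (ω₁ z) z) (hKz₀ : K z₀ = 0) :
    ∀ (γ δ : Γ) (z : ℂ), 0 < z.im →
      (K (A γ (A δ z)) - K (A δ z)) - (K (A γ z) - K z) = h γ * lam δ := by
  intro γ δ z hz
  set S : Set ℂ := {w : ℂ | 0 < w.im} with hS
  have hSopen : IsOpen S := isOpen_lt continuous_const Complex.continuous_im
  have hconv : Convex ℝ S := convex_halfSpace_im_gt 0
  set G : ℂ → ℂ := fun w => K (A γ w) - K w - h γ * F w with hG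
  have hGderiv : ∀ w ∈ S, HasDerivAt G 0 w := by
    intro w hw
    have hw' : 0 < w.im := hw
    have h1 : HasDerivAt (fun u => K (A γ u)) (ω₁ (A γ w) * deriv (A γ) w) w := by
      have := (hK (A γ w) (hAmaps γ w hw')).comp w ((hAdiff γ w hw').hasDerivAt)
      exact this
    have h2 := hK w hw'
    have h3 := (hF w hw').const_mul (h γ)
    have := (h1.sub h2).sub h3
    have heq : ω₁ (A γ w) * deriv (A γ) w - ω₁ w - h γ * ω w = 0 := by
      rw [hω₁trans γ w hw']; ring
    rw [heq] at this; exact this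
  have hGdiff : DifferentiableOn ℂ G S := fun w hw =>
    ((hGderiv w hw).differentiableAt).differentiableWithinAt
  have hGf' : ∀ w ∈ S, fderivWithin ℂ G S w = 0 := by
    intro w hw
    rw [fderivWithin_of_isOpen hSopen hw]
    have := ((hGderiv w hw).hasFDerivAt).fderiv
    rw [this]; ext u; simp
  have hzS : z ∈ S := hz
  have hδzS : A δ z ∈ S := hAmaps δ z hz
  have hconst : G (A δ z) = G z :=
    hconv.is_const_of_fderivWithin_eq_zero hGdiff hGf' hδzS hzS
  have hlamδ := hlam δ z hz
  simp only [hG] at hconst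
  have : K (A γ (A δ z)) - K (A δ z) - (K (A γ z) - K z)
      = h γ * (F (A δ z) - F z) := by linear_combination hconst
  rw [this, hlamδ]
end

section
/- The function L(z,θ) = ½ log y + 2 log η(z) + iθ on 𝓗 × ℝ satisfies: E⁻ L = 0, W L = i, and ω L = ½, where E⁻ = e^{−2iθ}(−2iy∂_x + 2y∂_y + i∂_θ), W = ∂_θ, and ω = −y²∂_y² − y²∂_x² + y∂_x∂_θ. Here log η(z) = πiz/12 − Σ_{n≥1} σ_{−1}(n) e^{2πinz}. -/
open Complex

/-- `σ_{−1}(n) = Σ_{d ∣ n} 1/d`. -/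
noncomputable def sigmaInv (n : ℕ) : ℂ :=
  ∑ d ∈ n.divisors, ((d : ℂ))⁻¹

/-- The standard branch of the logarithm of the Dedekind eta function:
`log η(z) = πiz/12 − Σ_{n≥1} σ_{−1}(n) e^{2πinz}`. -/
noncomputable def logEta (z : ℂ) : ℂ :=
  (Real.pi : ℂ) * Complex.I * z / 12 -
    ∑' n : ℕ, sigmaInv (n + 1) * Complex.exp (2 * (Real.pi : ℂ) * Complex.I * ((n : ℂ) + 1) * z)

/-- `L(z, θ) = ½ log y + 2 log η(z) + iθ` as a function of `(x, y, θ) ∈ ℝ³`, `z = x + iy`. -/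
noncomputable def Lfun (p : ℝ × ℝ × ℝ) : ℂ :=
  (1 / 2 : ℂ) * (Real.log p.2.1 : ℂ) + 2 * logEta ((p.1 : ℂ) + (p.2.1 : ℂ) * Complex.I) +
    Complex.I * (p.2.2 : ℂ)

/-- `∂_x`. -/
noncomputable def Px (g : ℝ × ℝ × ℝ → ℂ) : ℝ × ℝ × ℝ → ℂ :=
  fun p => deriv (fun t : ℝ => g (t, p.2.1, p.2.2)) p.1

/-- `∂_y`. -/
noncomputable def Py (g : ℝ × ℝ × ℝ → ℂ) : ℝ × ℝ × ℝ → ℂ :=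
  fun p => deriv (fun t : ℝ => g (p.1, t, p.2.2)) p.2.1

/-- `∂_θ = W`. -/
noncomputable def Ptheta (g : ℝ × ℝ × ℝ → ℂ) : ℝ × ℝ × ℝ → ℂ :=
  fun p => deriv (fun t : ℝ => g (p.1, p.2.1, t)) p.2.2

/-- `E⁻ = e^{−2iθ}(−2iy∂_x + 2y∂_y + i∂_θ)`. -/
noncomputable def Eminus (g : ℝ × ℝ × ℝ → ℂ) : ℝ × ℝ × ℝ → ℂ :=
  fun p => Complex.exp (-(2 * Complex.I * (p.2.2 : ℂ))) *
    (-(2 * Complex.I * (p.2.1 : ℂ) * Px g p) + 2 * (p.2.1 : ℂ) * Py g p + Complex.I * Ptheta g p)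

/-- The Casimir operator `ω = −y²∂_y² − y²∂_x² + y∂_x∂_θ`. -/
noncomputable def Casimir (g : ℝ × ℝ × ℝ → ℂ) : ℝ × ℝ × ℝ → ℂ :=
  fun p => -(p.2.1 : ℂ) ^ 2 * Py (Py g) p - (p.2.1 : ℂ) ^ 2 * Px (Px g) p +
    (p.2.1 : ℂ) * Px (Ptheta g) p

lemma norm_sigmaInv_le (n : ℕ) : ‖sigmaInv (n + 1)‖ ≤ (n : ℝ) + 1 := by
  have h1 : ‖sigmaInv (n + 1)‖ ≤ ∑ d ∈ (n + 1).divisors, ‖((d : ℂ))⁻¹‖ := norm_sum_le _ _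
  have h2 : ∑ d ∈ (n + 1).divisors, ‖((d : ℂ))⁻¹‖ ≤ ∑ _d ∈ (n + 1).divisors, (1 : ℝ) := by
    refine Finset.sum_le_sum fun d hd => ?_
    have hd1 : 1 ≤ d := (Nat.one_le_iff_ne_zero).2 (Nat.pos_of_mem_divisors hd).ne'
    rw [norm_inv, Complex.norm_natCast]
    exact inv_le_one_of_one_le₀ (by exact_mod_cast hd1)
  have h3 : ((n + 1).divisors.card : ℝ) ≤ (n : ℝ) + 1 := by
    have : (n + 1).divisors ⊆ Finset.Icc 1 (n + 1) := fun d hd =>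
      Finset.mem_Icc.2 ⟨Nat.pos_of_mem_divisors hd, Nat.le_of_dvd (Nat.succ_pos n)
        (Nat.mem_divisors.1 hd).1⟩
    have := Finset.card_le_card this
    rw [Nat.card_Icc] at this
    exact_mod_cast this
  calc ‖sigmaInv (n + 1)‖ ≤ _ := h1
    _ ≤ _ := h2
    _ = ((n + 1).divisors.card : ℝ) := by simp
    _ ≤ _ := h3

lemma norm_term (n : ℕ) (z : ℂ) :
    ‖Complex.exp (2 * (Real.pi : ℂ) * Complex.I * ((n : ℂ) + 1) * z)‖ =
      Real.exp (-(2 * Real.pi * ((n : ℝ) + 1) * z.im)) := by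
  rw [Complex.norm_exp]
  congr 1
  simp [Complex.mul_re, Complex.mul_im]

lemma diffOn_logEta : DifferentiableOn ℂ logEta {z : ℂ | 0 < z.im} := by
  intro z hz
  have hzim : (0 : ℝ) < z.im := hz
  set c : ℝ := z.im / 2 with hc
  have hc0 : 0 < c := by positivity
  set V : Set ℂ := {w : ℂ | c < w.im} with hV
  have hVopen : IsOpen V := isOpen_lt continuous_const Complex.continuous_im
  have hzV : z ∈ V := by
    simp only [hV, Set.mem_setOf_eq, hc]
    linarith
  set r : ℝ := Real.exp (-(2 * Real.pi * c)) with hr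
  have hr0 : 0 ≤ r := (Real.exp_pos _).le
  have hr1 : r < 1 := by
    rw [hr, Real.exp_lt_one_iff]
    nlinarith [Real.pi_pos]
  have hsum : Summable (fun n : ℕ => ((n : ℝ) + 1) * r ^ (n + 1)) := by
    have h := summable_pow_mul_geometric_of_norm_lt_one (r := r) 1
      (by rwa [Real.norm_eq_abs, _root_.abs_of_nonneg hr0])
    have := (summable_nat_add_iff 1).2 h
    refine this.congr fun n => ?_
    push_cast
    ring
  have hdiff : DifferentiableOn ℂ
      (fun w : ℂ => ∑' n : ℕ, sigmaInv (n + 1) *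
        Complex.exp (2 * (Real.pi : ℂ) * Complex.I * ((n : ℂ) + 1) * w)) V := by
    refine differentiableOn_tsum_of_summable_norm hsum (fun n => ?_) hVopen (fun n w hw => ?_)
    · exact ((Complex.differentiable_exp.comp ((differentiable_id.const_mul _))).const_mul _).differentiableOn
    · rw [norm_mul, norm_term]
      have h1 : ‖sigmaInv (n + 1)‖ ≤ (n : ℝ) + 1 := norm_sigmaInv_le n
      have h2 : Real.exp (-(2 * Real.pi * ((n : ℝ) + 1) * w.im)) ≤ r ^ (n + 1) := by
        rw [hr, ← Real.exp_nat_mul]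
        refine Real.exp_le_exp.2 ?_
        have hcw : c ≤ w.im := le_of_lt hw
        have : (0 : ℝ) < 2 * Real.pi * ((n : ℝ) + 1) := by positivity
        push_cast
        nlinarith
      exact mul_le_mul h1 h2 (Real.exp_pos _).le (by positivity)
  have hlin : DifferentiableOn ℂ (fun w : ℂ => (Real.pi : ℂ) * Complex.I * w / 12) V :=
    (((differentiable_id.const_mul _).div_const _).differentiableOn)
  have : DifferentiableOn ℂ logEta V := by
    have := hlin.sub hdiff
    refine this.congr fun w _ => ?_
    simp [logEta, mul_comm]
  exact ((this z hzV).differentiableAt (hVopen.mem_nhds hzV)).differentiableWithinAt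

lemma diffAt_logEta {z : ℂ} (hz : 0 < z.im) : DifferentiableAt ℂ logEta z :=
  (diffOn_logEta z hz).differentiableAt
    ((isOpen_lt continuous_const Complex.continuous_im).mem_nhds hz)

lemma diffAt_deriv_logEta {z : ℂ} (hz : 0 < z.im) : DifferentiableAt ℂ (deriv logEta) z := by
  have hU : IsOpen {z : ℂ | 0 < z.im} := isOpen_lt continuous_const Complex.continuous_im
  exact (((diffOn_logEta.analyticOnNhd hU).deriv) z hz).differentiableAt

lemma hasDerivAt_comp_real {f : ℂ → ℂ} {f' w : ℂ} (hf : HasDerivAt f f' w) {g : ℝ → ℂ}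
    {g' : ℂ} {t : ℝ} (hg : HasDerivAt g g' t) (hgt : g t = w) :
    HasDerivAt (fun s => f (g s)) (g' * f') t := by
  have := HasDerivAt.scomp_of_eq t hf hg hgt.symm
  simpa [Function.comp_def, smul_eq_mul] using this

lemma hasDerivAt_ofReal (x : ℝ) : HasDerivAt (fun t : ℝ => (t : ℂ)) 1 x := by
  exact Complex.ofRealCLM.hasDerivAt (x := x)

lemma hasDerivAt_x {f : ℂ → ℂ} {f' : ℂ} {x y : ℝ} (hf : HasDerivAt f f' ((x : ℂ) + (y : ℂ) * I)) :
    HasDerivAt (fun t : ℝ => f ((t : ℂ) + (y : ℂ) * I)) f' x := by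
  have hg : HasDerivAt (fun t : ℝ => (t : ℂ) + (y : ℂ) * I) 1 x :=
    (hasDerivAt_ofReal x).add_const _
  simpa using hasDerivAt_comp_real hf hg rfl

lemma hasDerivAt_y {f : ℂ → ℂ} {f' : ℂ} {x y : ℝ} (hf : HasDerivAt f f' ((x : ℂ) + (y : ℂ) * I)) :
    HasDerivAt (fun t : ℝ => f ((x : ℂ) + (t : ℂ) * I)) (I * f') y := by
  have hg : HasDerivAt (fun t : ℝ => (x : ℂ) + (t : ℂ) * I) I y := by
    simpa using ((hasDerivAt_ofReal y).mul_const I).const_add ((x : ℂ))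
  simpa using hasDerivAt_comp_real hf hg rfl

lemma pthetaL (q : ℝ × ℝ × ℝ) : Ptheta Lfun q = Complex.I := by
  have : HasDerivAt (fun t : ℝ => Lfun (q.1, q.2.1, t)) Complex.I q.2.2 := by
    unfold Lfun
    simpa using (((hasDerivAt_ofReal q.2.2).const_mul Complex.I).const_add
      ((1 / 2 : ℂ) * (Real.log q.2.1 : ℂ) + 2 * logEta ((q.1 : ℂ) + (q.2.1 : ℂ) * I)))
  exact this.deriv

lemma im_mk (x y : ℝ) : ((x : ℂ) + (y : ℂ) * I).im = y := by simp

lemma pxL (q : ℝ × ℝ × ℝ) (h : 0 < q.2.1) :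
    Px Lfun q = 2 * deriv logEta ((q.1 : ℂ) + (q.2.1 : ℂ) * I) := by
  have hz : 0 < ((q.1 : ℂ) + (q.2.1 : ℂ) * I).im := by rwa [im_mk]
  have hf := (diffAt_logEta hz).hasDerivAt
  have : HasDerivAt (fun t : ℝ => Lfun (t, q.2.1, q.2.2))
      (2 * deriv logEta ((q.1 : ℂ) + (q.2.1 : ℂ) * I)) q.1 := by
    unfold Lfun
    simpa using (((hasDerivAt_x hf).const_mul 2).const_add
      ((1 / 2 : ℂ) * (Real.log q.2.1 : ℂ))).add_const (Complex.I * (q.2.2 : ℂ))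
  exact this.deriv

lemma pyL (q : ℝ × ℝ × ℝ) (h : 0 < q.2.1) :
    Py Lfun q = (1 / 2 : ℂ) * (q.2.1 : ℂ)⁻¹ +
      2 * (I * deriv logEta ((q.1 : ℂ) + (q.2.1 : ℂ) * I)) := by
  have hz : 0 < ((q.1 : ℂ) + (q.2.1 : ℂ) * I).im := by rwa [im_mk]
  have hf := (diffAt_logEta hz).hasDerivAt
  have h1 : HasDerivAt (fun t : ℝ => (1 / 2 : ℂ) * (Real.log t : ℂ))
      ((1 / 2 : ℂ) * (q.2.1 : ℂ)⁻¹) q.2.1 := by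
    simpa [Complex.ofReal_inv] using
      ((Real.hasDerivAt_log h.ne').ofReal_comp).const_mul (1 / 2 : ℂ)
  have h2 : HasDerivAt (fun t : ℝ => 2 * logEta ((q.1 : ℂ) + (t : ℂ) * I))
      (2 * (I * deriv logEta ((q.1 : ℂ) + (q.2.1 : ℂ) * I))) q.2.1 :=
    (hasDerivAt_y hf).const_mul 2
  have : HasDerivAt (fun t : ℝ => Lfun (q.1, t, q.2.2))
      ((1 / 2 : ℂ) * (q.2.1 : ℂ)⁻¹ +
        2 * (I * deriv logEta ((q.1 : ℂ) + (q.2.1 : ℂ) * I))) q.2.1 := by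
    unfold Lfun
    simpa using (h1.add h2).add_const (Complex.I * (q.2.2 : ℂ))
  exact this.deriv
/-- The function `L(z,θ) = ½ log y + 2 log η(z) + iθ` satisfies `E⁻L = 0`, `WL = i` and
`ωL = ½` on `{y > 0}`. -/
theorem stmt18 (p : ℝ × ℝ × ℝ) (hp : 0 < p.2.1) :
    Eminus Lfun p = 0 ∧ Ptheta Lfun p = Complex.I ∧ Casimir Lfun p = 1 / 2 := by
  obtain ⟨x, y, θ⟩ := p
  simp only at hp
  set z : ℂ := (x : ℂ) + (y : ℂ) * I with hzdef
  have hz : 0 < z.im := by rwa [hzdef, im_mk]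
  have hyne : ((y : ℂ)) ≠ 0 := by exact_mod_cast hp.ne'
  have hf2 := (diffAt_deriv_logEta hz).hasDerivAt
  set f' : ℂ := deriv logEta z
  set f'' : ℂ := deriv (deriv logEta) z
  -- first partials at p
  have hPx : Px Lfun (x, y, θ) = 2 * f' := pxL (x, y, θ) hp
  have hPy : Py Lfun (x, y, θ) = (1 / 2 : ℂ) * (y : ℂ)⁻¹ + 2 * (I * f') := pyL (x, y, θ) hp
  have hPt : Ptheta Lfun (x, y, θ) = Complex.I := pthetaL (x, y, θ)
  -- second partials
  have hPxPt : Px (Ptheta Lfun) (x, y, θ) = 0 := by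
    have : (fun t : ℝ => Ptheta Lfun (t, y, θ)) = fun _ => Complex.I :=
      funext fun t => pthetaL (t, y, θ)
    simp [Px, this]
  have hPxPx : Px (Px Lfun) (x, y, θ) = 2 * f'' := by
    have he : (fun t : ℝ => Px Lfun (t, y, θ)) =
        fun t : ℝ => 2 * deriv logEta ((t : ℂ) + (y : ℂ) * I) :=
      funext fun t => pxL (t, y, θ) hp
    have : HasDerivAt (fun t : ℝ => 2 * deriv logEta ((t : ℂ) + (y : ℂ) * I)) (2 * f'') x :=
      (hasDerivAt_x hf2).const_mul 2
    rw [Px, he]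
    exact this.deriv
  have hPyPy : Py (Py Lfun) (x, y, θ) =
      (1 / 2 : ℂ) * (-((y : ℂ) ^ 2)⁻¹) + 2 * (I * (I * f'')) := by
    have he : (fun t : ℝ => Py Lfun (x, t, θ)) =ᶠ[nhds y]
        fun t : ℝ => (1 / 2 : ℂ) * (t : ℂ)⁻¹ +
          2 * (I * deriv logEta ((x : ℂ) + (t : ℂ) * I)) := by
      filter_upwards [eventually_gt_nhds hp] with t ht
      exact pyL (x, t, θ) ht
    have h1 : HasDerivAt (fun t : ℝ => (1 / 2 : ℂ) * (t : ℂ)⁻¹)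
        ((1 / 2 : ℂ) * (-((y : ℂ) ^ 2)⁻¹)) y := by
      have := hasDerivAt_comp_real (hasDerivAt_inv hyne) (hasDerivAt_ofReal y) rfl
      simpa using this.const_mul (1 / 2 : ℂ)
    have h2 : HasDerivAt (fun t : ℝ => 2 * (I * deriv logEta ((x : ℂ) + (t : ℂ) * I)))
        (2 * (I * (I * f''))) y := ((hasDerivAt_y hf2).const_mul I).const_mul 2
    rw [Py, he.deriv_eq]
    exact (h1.add h2).deriv
  refine ⟨?_, hPt, ?_⟩
  · show Eminus Lfun (x, y, θ) = 0
    rw [Eminus]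
    simp only [hPx, hPy, hPt]
    rw [mul_eq_zero]
    right
    rw [Complex.I_mul_I]
    field_simp
    ring
  · show -(y : ℂ) ^ 2 * Py (Py Lfun) (x, y, θ) - (y : ℂ) ^ 2 * Px (Px Lfun) (x, y, θ) +
        (y : ℂ) * Px (Ptheta Lfun) (x, y, θ) = 1 / 2
    rw [hPyPy, hPxPx, hPxPt]
    have hI : Complex.I * (Complex.I * f'') = -f'' := by
      rw [← mul_assoc, Complex.I_mul_I]; ring
    rw [hI]
    field_simp
    ring
end
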